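/- arXiv:2011.14161 — 8 statements merged into one kernel-verified Lean document; each statement's English description precedes it below -/
import Mathlib

section
/- Let P be a positive integer, A a real number with A ≥ 1, and k a positive integer. Then the number of k-tuples (y_1, ..., y_k) with each y_i in {1, 2, ..., P} satisfying y_1 · y_2 ⋯ y_k ≤ P^k / A is at most k · P^k / A^(1/k). -/
open Classical in
theorem stmt0 (P k : ℕ) (hP : 0 < P) (hk : 0 < k) (A : ℝ) (hA : 1 ≤ A) :
    (((Fintype.piFinset fun _ : Fin k => Finset.Icc 1 P).filter
        (fun y : Fin k → ℕ => ((∏ i, y i : ℕ) : ℝ) ≤ (P : ℝ) ^ k / A)).card : ℝ) ≤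
      (k : ℝ) * (P : ℝ) ^ k / A ^ ((1 : ℝ) / k) := by
  haveI : Nonempty (Fin k) := Fin.pos_iff_nonempty.mp hk
  have hA0 : (0:ℝ) < A := lt_of_lt_of_le one_pos hA
  have hr : (0:ℝ) < A ^ ((1:ℝ)/k) := Real.rpow_pos_of_pos hA0 _
  have hk0 : (k:ℝ) ≠ 0 := Nat.cast_ne_zero.mpr hk.ne'
  set c : ℝ := (P : ℝ) / A ^ ((1:ℝ)/k) with hc
  have hc0 : 0 < c := div_pos (by exact_mod_cast hP) hr
  have hck : c ^ k = (P:ℝ)^k / A := by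
    rw [hc, div_pow, ← Real.rpow_natCast (A ^ ((1:ℝ)/k)) k, ← Real.rpow_mul hA0.le,
      one_div_mul_cancel hk0, Real.rpow_one]
  set B := ⌊c⌋₊ with hB
  have hsub : (Fintype.piFinset fun _ : Fin k => Finset.Icc 1 P).filter
        (fun y : Fin k → ℕ => ((∏ i, y i : ℕ) : ℝ) ≤ (P : ℝ) ^ k / A)
      ⊆ Finset.univ.biUnion (fun i : Fin k =>
        Fintype.piFinset fun j : Fin k => Finset.Icc 1 (if j = i then min B P else P)) := by
    intro y hy
    simp only [Finset.mem_filter, Fintype.mem_piFinset, Finset.mem_Icc] at hy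
    obtain ⟨hy1, hy2⟩ := hy
    have hex : ∃ i, (y i : ℝ) ≤ c := by
      by_contra h
      push_neg at h
      have hprod : c ^ k < ∏ i, (y i : ℝ) := by
        calc c ^ k = ∏ _i : Fin k, c := by
              rw [Finset.prod_const, Finset.card_univ, Fintype.card_fin]
          _ < ∏ i, (y i : ℝ) := Finset.prod_lt_prod_of_nonempty (fun i _ => hc0)
              (fun i _ => h i) (Finset.univ_nonempty (α := Fin k))
      rw [hck] at hprod
      push_cast at hy2
      exact absurd hy2 (not_le.mpr hprod)
    obtain ⟨i, hi⟩ := hex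
    refine Finset.mem_biUnion.mpr ⟨i, Finset.mem_univ i, ?_⟩
    simp only [Fintype.mem_piFinset, Finset.mem_Icc]
    intro j
    by_cases hj : j = i
    · subst hj
      simp only [if_pos rfl]
      exact ⟨(hy1 j).1, le_min (Nat.le_floor hi) (hy1 j).2⟩
    · simp only [if_neg hj]
      exact hy1 j
  have hcard : ((Fintype.piFinset fun _ : Fin k => Finset.Icc 1 P).filter
        (fun y : Fin k → ℕ => ((∏ i, y i : ℕ) : ℝ) ≤ (P : ℝ) ^ k / A)).card
      ≤ k * (B * P^(k-1)) := by
    refine (Finset.card_le_card hsub).trans (Finset.card_biUnion_le.trans ?_)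
    have h1 : ∀ i : Fin k, (Fintype.piFinset fun j : Fin k =>
        Finset.Icc 1 (if j = i then min B P else P)).card ≤ B * P^(k-1) := by
      intro i
      rw [Fintype.card_piFinset]
      have hcc : ∀ j : Fin k, (Finset.Icc 1 (if j = i then min B P else P)).card
          = if j = i then min B P else P := by
        intro j; rw [Nat.card_Icc]; omega
      calc ∏ j, (Finset.Icc 1 (if j = i then min B P else P)).card
          = ∏ j, (if j = i then min B P else P) := Finset.prod_congr rfl (fun j _ => hcc j)
        _ = (min B P) * ∏ j ∈ Finset.univ.erase i, (if j = i then min B P else P) := by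
            rw [← Finset.mul_prod_erase Finset.univ _ (Finset.mem_univ i), if_pos rfl]
        _ = (min B P) * ∏ j ∈ Finset.univ.erase i, P := by
            congr 1
            exact Finset.prod_congr rfl (fun j hj => if_neg (Finset.ne_of_mem_erase hj))
        _ = (min B P) * P ^ (k-1) := by
            rw [Finset.prod_const, Finset.card_erase_of_mem (Finset.mem_univ i),
              Finset.card_univ, Fintype.card_fin]
        _ ≤ B * P ^ (k-1) := Nat.mul_le_mul_right _ (min_le_left _ _)
    calc ∑ i : Fin k, (Fintype.piFinset fun j : Fin k =>
          Finset.Icc 1 (if j = i then min B P else P)).card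
        ≤ ∑ _i : Fin k, B * P^(k-1) := Finset.sum_le_sum (fun i _ => h1 i)
      _ = k * (B * P^(k-1)) := by
          rw [Finset.sum_const, Finset.card_univ, Fintype.card_fin, smul_eq_mul]
  have hBc : (B:ℝ) ≤ c := Nat.floor_le hc0.le
  have hPk : (P:ℝ)^k = (P:ℝ) * (P:ℝ)^(k-1) := by
    obtain ⟨m, rfl⟩ := Nat.exists_eq_succ_of_ne_zero hk.ne'
    rw [Nat.succ_sub_one, pow_succ']
  calc (((Fintype.piFinset fun _ : Fin k => Finset.Icc 1 P).filter
        (fun y : Fin k → ℕ => ((∏ i, y i : ℕ) : ℝ) ≤ (P : ℝ) ^ k / A)).card : ℝ)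
      ≤ ((k * (B * P^(k-1)) : ℕ) : ℝ) := by exact_mod_cast hcard
    _ = (k:ℝ) * (B:ℝ) * (P:ℝ)^(k-1) := by push_cast; ring
    _ ≤ (k:ℝ) * c * (P:ℝ)^(k-1) := by gcongr
    _ = (k : ℝ) * (P : ℝ) ^ k / A ^ ((1 : ℝ) / k) := by
        rw [hPk, hc]; field_simp
end

section
/- Let y_1 < y_2 < ... < y_k be real numbers with 0 < y_1, y_k ≤ 2π, such that the gaps are nondecreasing: y_1 ≤ y_2 − y_1 ≤ y_3 − y_2 ≤ ... ≤ y_k − y_{k−1}. Suppose q is an index with y_q ≤ π < y_{q+1} and set a := y_{q+1} − y_q, assuming a < π. Then ∑_{i=1}^{k} sin(y_i) ≥ −sin(a/2). -/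
/-!
Multiply the sum by `2 sin (a/2)`. Since `2 sin (a/2) sin x = cos (x - a/2) - cos (x + a/2)`,
the product telescopes into `cos (y₁ - a/2) - cos (y_k + a/2)` plus the cross terms
`cos (y_{m+1} - a/2) - cos (y_m + a/2) = 2 sin ((y_m + y_{m+1})/2) sin ((a - (y_{m+1} - y_m))/2)`.
Each cross term is nonnegative: below `π` the gaps are at most `a` and the midpoints lie in
`[0, π]`, above `π` the gaps are at least `a` and the midpoints lie in `[π, 2π]`, so both factors
change sign together. Finally `0 < y₁ ≤ a` gives `cos (y₁ - a/2) ≥ cos a = 1 - 2 sin² (a/2)`.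
-/

open Real Finset

lemma monotoneOn_Icc_of_le_add_one {β : Type*} [Preorder β] {f : ℕ → β} {m n : ℕ}
    (hf : ∀ i, m ≤ i → i < n → f i ≤ f (i + 1)) : MonotoneOn f (Set.Icc m n) :=
  monotoneOn_of_le_succ Set.ordConnected_Icc fun i _ hi hi' => by
    rw [Order.succ_eq_add_one] at hi' ⊢
    exact hf i hi.1 (by simpa using hi'.2)

lemma two_mul_sin_mul_sin_eq_cos_sub_cos_add (c x : ℝ) :
    2 * sin c * sin x = cos (x - c) - cos (x + c) := by
  rw [two_mul_sin_mul_sin, ← cos_neg (c - x), neg_sub, add_comm]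

theorem two_mul_sin_mul_sum_sin_eq (y : ℕ → ℝ) (c : ℝ) {n : ℕ} (hn : 1 ≤ n) :
    2 * sin c * ∑ i ∈ Icc 1 n, sin (y i) =
      cos (y 1 - c) - cos (y n + c) +
        ∑ m ∈ Ico 1 n, (cos (y (m + 1) - c) - cos (y m + c)) := by
  induction n, hn using Nat.le_induction with
  | base => simp [two_mul_sin_mul_sin_eq_cos_sub_cos_add]
  | succ n hn ih =>
    rw [sum_Icc_succ_top (by omega), sum_Ico_succ_top hn, mul_add, ih,
      two_mul_sin_mul_sin_eq_cos_sub_cos_add]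
    ring

lemma cos_sub_half_sub_cos_add_half (u v a : ℝ) :
    cos (v - a / 2) - cos (u + a / 2) = 2 * sin ((u + v) / 2) * sin ((a - (v - u)) / 2) := by
  rw [cos_sub_cos, ← neg_neg ((a - (v - u)) / 2), sin_neg]
  ring_nf

lemma cos_add_half_le_cos_sub_half_of_le_pi {u v a : ℝ} (hu : 0 ≤ u) (huv : u ≤ v)
    (hv : v ≤ π) (hgap : v - u ≤ a) (ha : a ≤ 2 * π) : cos (u + a / 2) ≤ cos (v - a / 2) := by
  rw [← sub_nonneg, cos_sub_half_sub_cos_add_half]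
  have h₁ := sin_nonneg_of_nonneg_of_le_pi (x := (u + v) / 2) (by linarith) (by linarith)
  have h₂ := sin_nonneg_of_nonneg_of_le_pi (x := (a - (v - u)) / 2) (by linarith) (by linarith)
  positivity

lemma cos_add_half_le_cos_sub_half_of_pi_le {u v a : ℝ} (hu : π ≤ u) (huv : u ≤ v)
    (hv : v ≤ 2 * π) (hgap : a ≤ v - u) (ha : 0 ≤ a) : cos (u + a / 2) ≤ cos (v - a / 2) := by
  rw [← sub_nonneg, cos_sub_half_sub_cos_add_half]
  have h₁ : sin ((u + v) / 2) ≤ 0 := by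
    rw [← sub_add_cancel ((u + v) / 2) π, sin_add_pi]
    linarith [sin_nonneg_of_nonneg_of_le_pi (x := (u + v) / 2 - π) (by linarith) (by linarith)]
  have h₂ := sin_nonpos_of_nonpos_of_neg_pi_le (x := (a - (v - u)) / 2) (by linarith)
    (by linarith)
  nlinarith

lemma neg_two_mul_sin_sq_half_le_cos_sub_cos {x a : ℝ} (hx : 0 ≤ x) (hxa : x ≤ a) (ha : a ≤ π)
    (z : ℝ) : -(2 * sin (a / 2) ^ 2) ≤ cos (x - a / 2) - cos z := by
  have hcos : cos a ≤ cos (x - a / 2) := by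
    rw [← cos_abs (x - a / 2)]
    exact cos_le_cos_of_nonneg_of_le_pi (abs_nonneg _) ha
      (abs_le.mpr ⟨by linarith, by linarith⟩)
  have hdouble : cos a = 1 - 2 * sin (a / 2) ^ 2 := by
    rw [← cos_two_mul_eq_one_sub, mul_div_cancel₀ a two_ne_zero]
  linarith [cos_le_one z]

theorem stmt2 (k q : ℕ) (y : ℕ → ℝ) (hq1 : 1 ≤ q) (hqk : q < k)
    (hmono : ∀ i, 1 ≤ i → i < k → y i < y (i + 1))
    (hpos : 0 < y 1) (hlast : y k ≤ 2 * Real.pi)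
    (hgap1 : y 1 ≤ y 2 - y 1)
    (hgaps : ∀ i, 2 ≤ i → i < k → y i - y (i - 1) ≤ y (i + 1) - y i)
    (hsplitq : y q ≤ Real.pi) (hsplitq1 : Real.pi < y (q + 1))
    (ha : y (q + 1) - y q < Real.pi) :
    -(Real.sin ((y (q + 1) - y q) / 2)) ≤ ∑ i ∈ Finset.Icc 1 k, Real.sin (y i) := by
  have hy : MonotoneOn y (Set.Icc 1 k) :=
    monotoneOn_Icc_of_le_add_one fun i h₁ h₂ => (hmono i h₁ h₂).le
  have hgap : MonotoneOn (fun i => y (i + 1) - y i) (Set.Icc 1 (k - 1)) :=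
    monotoneOn_Icc_of_le_add_one fun i h₁ h₂ => by
      simpa using hgaps (i + 1) (by omega) (by omega)
  have hmem {i j : ℕ} (h₁ : 1 ≤ i) (h₂ : i ≤ j) : i ∈ Set.Icc 1 j := ⟨h₁, h₂⟩
  set a := y (q + 1) - y q
  have ha0 : 0 < a := sub_pos.mpr (hmono q hq1 hqk)
  have hya : y 1 ≤ a := hgap1.trans (hgap (hmem le_rfl (by omega)) (hmem hq1 (by omega)) hq1)
  have hcross : ∀ m ∈ Ico 1 k, 0 ≤ cos (y (m + 1) - a / 2) - cos (y m + a / 2) := by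
    intro m hm
    obtain ⟨hm1, hmk⟩ := mem_Ico.mp hm
    have hstep := (hmono m hm1 hmk).le
    rw [sub_nonneg]
    rcases lt_trichotomy m q with hlt | rfl | hgt
    · exact cos_add_half_le_cos_sub_half_of_le_pi
        (hpos.le.trans (hy (hmem le_rfl (by omega)) (hmem hm1 (by omega)) hm1)) hstep
        ((hy (hmem (by omega) (by omega)) (hmem hq1 hqk.le) hlt).trans hsplitq)
        (hgap (hmem hm1 (by omega)) (hmem hq1 (by omega)) hlt.le) (by linarith)
    · exact (congrArg cos (by ring)).le
    · exact cos_add_half_le_cos_sub_half_of_pi_le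
        (hsplitq1.le.trans (hy (hmem (by omega) (by omega)) (hmem hm1 hmk.le) hgt)) hstep
        ((hy (hmem (by omega) hmk) (hmem (by omega) le_rfl) hmk).trans hlast)
        (hgap (hmem hq1 (by omega)) (hmem hm1 (by omega)) hgt.le) ha0.le
  have hsin : 0 < sin (a / 2) := sin_pos_of_pos_of_lt_pi (by linarith) (by linarith)
  have hbound : 2 * sin (a / 2) * -sin (a / 2) ≤ 2 * sin (a / 2) * ∑ i ∈ Icc 1 k, sin (y i) := by
    rw [two_mul_sin_mul_sum_sin_eq y _ (by omega)]
    linarith [sum_nonneg hcross,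
      neg_two_mul_sin_sq_half_le_cos_sub_cos hpos.le hya ha.le (y k + a / 2)]
  exact le_of_mul_le_mul_left hbound (by positivity)
end

section
/- Let (c_k) be a nonincreasing sequence of nonnegative reals, α > 0, γ ≥ 2, and suppose that for each positive integer l, setting x_l := π / (γ^{α+1} l^α), one has |∑_{k=l+1}^{2l} c_k sin(k^α x_l)| < ε. Then c_{2l} · 2l ≤ γ^{α+1} ε. (Key step: for l+1 ≤ k ≤ 2l, the argument k^α x_l lies in (0, π/2], so sin(k^α x_l) ≥ (2/π) k^α x_l.) -/
/-!
On the block `l < k ≤ 2l` the arguments `k^α x_l` lie between `π / γ^(α+1)` and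
`2^α π / γ^(α+1) ≤ π / 2`, so Jordan's inequality `sin t ≥ 2t/π` bounds every sine from below by
`2 / γ^(α+1)`. As `c` is nonincreasing and nonnegative, the block is then at least
`l · c_{2l} · 2 / γ^(α+1)`, while by hypothesis it is less than `ε`.
-/

open Real Finset

noncomputable def testPoint (α γ L : ℝ) : ℝ := π / (γ ^ (α + 1) * L ^ α)

section testPoint

variable {α γ L t : ℝ}

lemma rpow_mul_testPoint (hγ : 0 < γ) (hL : 0 < L) :
    L ^ α * testPoint α γ L = π / γ ^ (α + 1) := by
  have : 0 < L ^ α := rpow_pos_of_pos hL α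
  have : 0 < γ ^ (α + 1) := rpow_pos_of_pos hγ _
  unfold testPoint
  field_simp

lemma testPoint_pos (hγ : 0 < γ) (hL : 0 < L) : 0 < testPoint α γ L :=
  div_pos pi_pos (mul_pos (rpow_pos_of_pos hγ _) (rpow_pos_of_pos hL α))

lemma rpow_mul_testPoint_le_pi_div_two (hα : 0 ≤ α) (hγ : 2 ≤ γ) (hL : 0 < L) (ht₀ : 0 ≤ t)
    (ht : t ≤ 2 * L) : t ^ α * testPoint α γ L ≤ π / 2 := by
  have hγ₀ : 0 < γ := by linarith
  have h2γ : (2 : ℝ) ^ (α + 1) ≤ γ ^ (α + 1) := rpow_le_rpow zero_le_two hγ (by linarith)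
  calc t ^ α * testPoint α γ L
      ≤ (2 * L) ^ α * testPoint α γ L :=
        mul_le_mul_of_nonneg_right (rpow_le_rpow ht₀ ht hα) (testPoint_pos hγ₀ hL).le
    _ = 2 ^ α * π / γ ^ (α + 1) := by
        rw [mul_rpow zero_le_two hL.le, mul_assoc, rpow_mul_testPoint hγ₀ hL, mul_div_assoc]
    _ ≤ 2 ^ α * π / 2 ^ (α + 1) :=
        div_le_div_of_nonneg_left (by positivity) (by positivity) h2γ
    _ = π / 2 := by
        rw [rpow_add_one two_ne_zero]
        field_simp

lemma two_div_rpow_le_sin_rpow_mul_testPoint (hα : 0 ≤ α) (hγ : 2 ≤ γ) (hL : 0 < L)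
    (hLt : L ≤ t) (ht : t ≤ 2 * L) :
    2 / γ ^ (α + 1) ≤ sin (t ^ α * testPoint α γ L) := by
  have hγ₀ : 0 < γ := by linarith
  calc 2 / γ ^ (α + 1) = 2 / π * (L ^ α * testPoint α γ L) := by
        rw [rpow_mul_testPoint hγ₀ hL]
        field_simp
    _ ≤ 2 / π * (t ^ α * testPoint α γ L) := by
        gcongr
        exact (testPoint_pos hγ₀ hL).le
    _ ≤ sin (t ^ α * testPoint α γ L) :=
        mul_le_sin (mul_nonneg (rpow_nonneg (hL.le.trans hLt) α) (testPoint_pos hγ₀ hL).le)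
          (rpow_mul_testPoint_le_pi_div_two hα hγ hL (hL.le.trans hLt) ht)

end testPoint

theorem stmt6 (c : ℕ → ℝ) (hnn : ∀ k, 0 ≤ c k) (hmono : ∀ k, c (k + 1) ≤ c k)
    (α γ ε : ℝ) (hα : 0 < α) (hγ : 2 ≤ γ)
    (h : ∀ l : ℕ, 0 < l →
      |∑ k ∈ Finset.Icc (l + 1) (2 * l),
          c k * Real.sin ((k : ℝ) ^ α * (Real.pi / (γ ^ (α + 1) * (l : ℝ) ^ α)))| < ε) :
    ∀ l : ℕ, 0 < l → c (2 * l) * (2 * l : ℝ) ≤ γ ^ (α + 1) * ε := by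
  intro l hl
  have hc : Antitone c := antitone_nat_of_succ_le hmono
  have hl' : (0 : ℝ) < l := Nat.cast_pos.mpr hl
  have hγpow : 0 < γ ^ (α + 1) := rpow_pos_of_pos (by linarith) _
  have hblock : c (2 * l) * (2 * l) / γ ^ (α + 1) ≤
      ∑ k ∈ Icc (l + 1) (2 * l), c k * sin ((k : ℝ) ^ α * testPoint α γ l) := by
    calc c (2 * l) * (2 * l) / γ ^ (α + 1)
        = ∑ _k ∈ Icc (l + 1) (2 * l), c (2 * l) * (2 / γ ^ (α + 1)) := by
          rw [sum_const, Nat.card_Icc, show 2 * l + 1 - (l + 1) = l by omega, nsmul_eq_mul]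
          ring
      _ ≤ _ := sum_le_sum fun k hk => by
          obtain ⟨hlk, hk2⟩ := mem_Icc.mp hk
          refine mul_le_mul (hc hk2) ?_ (by positivity) (hnn k)
          exact two_div_rpow_le_sin_rpow_mul_testPoint hα.le hγ hl'
            (by exact_mod_cast (Nat.le_succ l).trans hlk) (by exact_mod_cast hk2)
  have hlt := (hblock.trans (le_abs_self _)).trans_lt (h l hl)
  exact ((div_lt_iff₀ hγpow).mp hlt).le.trans_eq (mul_comm _ _)
end

section
/- Let f be a polynomial with real coefficients that is odd (f(−x) = −f(x)) and such that Q·f has integer coefficients for some positive integer Q. Let M, C, n be positive integers. Then for every integer g, ∑_{k=g+1}^{g+Q·M·n!} sin( f(k) · 2πC/(M·n!) ) = 0. -/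
/-!
Write `N = Q L` with `L = M n!`. Since `Q f = p` has integer coefficients, `N ∣ p(k + N) - p(k)`,
so `f(k + N) - f(k) ∈ L ℤ` and `k ↦ sin (2π C f(k) / L)` is `N`-periodic on `ℤ`; it is also odd.
The sum of an odd `N`-periodic function over any `N` consecutive integers vanishes: the sum does
not depend on where the block starts, and reflecting the block changes its sign.
-/

open Finset Polynomial

namespace Function

variable {M : Type*} {φ : ℤ → M} {N : ℕ}

theorem Periodic.sum_range_int_add [AddCancelCommMonoid M] (hφ : Periodic φ N) (a : ℤ) :
    ∑ i ∈ range N, φ (a + i) = ∑ i ∈ range N, φ i := by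
  have step : ∀ b : ℤ, ∑ i ∈ range N, φ (b + 1 + i) = ∑ i ∈ range N, φ (b + i) := by
    intro b
    have h := (sum_range_succ' (fun i : ℕ => φ (b + i)) N).symm.trans
      (sum_range_succ (fun i : ℕ => φ (b + i)) N)
    simp only [Nat.cast_add, Nat.cast_one, Nat.cast_zero, add_zero, hφ b] at h
    simpa only [add_assoc, add_comm (1 : ℤ)] using add_right_cancel h
  induction a using Int.induction_on with
  | zero => simp
  | succ i ih => rw [step, ih]
  | pred i ih => rw [← ih, ← step, sub_add_cancel]

theorem Odd.sum_range_int_add_eq_zero_of_periodic [AddCommGroup M] [IsAddTorsionFree M]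
    (hodd : φ.Odd) (hper : Periodic φ N) (a : ℤ) : ∑ i ∈ range N, φ (a + i) = 0 := by
  rw [hper.sum_range_int_add, ← neg_eq_self, ← sum_neg_distrib]
  -- reflecting `range N` turns the values `φ (-i)` into a shifted block `φ (1 - N + j)`
  calc ∑ i ∈ range N, -φ i
      = ∑ j ∈ range N, φ (-((N - 1 - j : ℕ) : ℤ)) := by
        rw [← sum_range_reflect]; simp only [hodd _]
    _ = ∑ j ∈ range N, φ (1 - N + j) := by
        refine sum_congr rfl fun j hj => ?_
        rw [Nat.cast_sub (by grind), Nat.cast_sub (by grind)]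
        ring_nf
    _ = ∑ i ∈ range N, φ i := hper.sum_range_int_add _

theorem Odd.sum_Icc_eq_zero_of_periodic [AddCommGroup M] [IsAddTorsionFree M]
    (hodd : φ.Odd) (hper : Periodic φ N) (g : ℤ) : ∑ k ∈ Icc (g + 1) (g + N), φ k = 0 := by
  rw [Int.Icc_eq_finset_map, sum_map, add_sub_add_comm, add_sub_cancel_left, sub_self, add_zero,
    Int.toNat_natCast]
  exact hodd.sum_range_int_add_eq_zero_of_periodic hper (g + 1)

end Function

theorem Polynomial.exists_eval_add_mul_sub_eval_eq_mul {f : ℝ[X]} {Q : ℕ} {p : ℤ[X]}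
    (hp : p.map (Int.castRingHom ℝ) = (Q : ℝ) • f) (k L : ℤ) :
    ∃ t : ℤ, f.eval ((k : ℝ) + Q * L) - f.eval (k : ℝ) = L * t := by
  rcases eq_or_ne Q 0 with rfl | hQ
  · exact ⟨0, by simp⟩
  have hpf : ∀ m : ℤ, ((p.eval m : ℤ) : ℝ) = Q * f.eval (m : ℝ) := fun m => by
    simpa using congrArg (eval (m : ℝ)) hp
  obtain ⟨t, ht⟩ := sub_dvd_eval_sub (k + Q * L) k p
  refine ⟨t, mul_left_cancel₀ (Nat.cast_ne_zero.mpr hQ : (Q : ℝ) ≠ 0) ?_⟩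
  have := congrArg (Int.cast : ℤ → ℝ) ht
  push_cast [hpf] at this
  linear_combination this

theorem Polynomial.periodic_sin_eval_mul_two_pi_div {f : ℝ[X]} {Q : ℕ} {p : ℤ[X]}
    (hp : p.map (Int.castRingHom ℝ) = (Q : ℝ) • f) (C : ℤ) (L : ℕ) :
    Function.Periodic (fun k : ℤ => Real.sin (f.eval (k : ℝ) * (2 * Real.pi * C / L)))
      (Q * L : ℕ) := by
  intro k
  rcases eq_or_ne L 0 with rfl | hL
  · simp
  obtain ⟨t, ht⟩ := exists_eval_add_mul_sub_eval_eq_mul hp k L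
  have hshift : f.eval ((k + (Q * L : ℕ) : ℤ) : ℝ) * (2 * Real.pi * C / L) =
      f.eval (k : ℝ) * (2 * Real.pi * C / L) + (t * C : ℤ) * (2 * Real.pi) := by
    push_cast at ht ⊢
    rw [eq_add_of_sub_eq' ht]
    field_simp
  simp only [hshift, Real.sin_add_int_mul_two_pi]

theorem Polynomial.odd_sin_eval_mul {f : ℝ[X]} (hodd : ∀ x : ℝ, f.eval (-x) = -f.eval x) (θ : ℝ) :
    Function.Odd (fun k : ℤ => Real.sin (f.eval (k : ℝ) * θ)) := fun k => by
  simp only [Int.cast_neg, hodd, neg_mul, Real.sin_neg]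

theorem stmt7_general (f : Polynomial ℝ) (hodd : ∀ x : ℝ, f.eval (-x) = -f.eval x)
    (Q : ℕ)
    (hint : ∃ p : Polynomial ℤ, p.map (Int.castRingHom ℝ) = (Q : ℝ) • f)
    (M C n : ℕ) (g : ℤ) :
    ∑ k ∈ Finset.Icc (g + 1) (g + (Q * M * n.factorial : ℕ)),
        Real.sin (f.eval (k : ℝ) * (2 * Real.pi * (C : ℝ) / ((M : ℝ) * (n.factorial : ℝ)))) =
      0 := by
  obtain ⟨p, hp⟩ := hint
  have hper := periodic_sin_eval_mul_two_pi_div hp C (M * n.factorial)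
  rw [mul_assoc Q]
  exact (odd_sin_eval_mul hodd _).sum_Icc_eq_zero_of_periodic (by exact_mod_cast hper) g

theorem stmt7 (f : Polynomial ℝ) (hodd : ∀ x : ℝ, f.eval (-x) = -f.eval x)
    (Q : ℕ) (hQ : 0 < Q)
    (hint : ∃ p : Polynomial ℤ, p.map (Int.castRingHom ℝ) = (Q : ℝ) • f)
    (M C n : ℕ) (hM : 0 < M) (hC : 0 < C) (hn : 0 < n) (g : ℤ) :
    ∑ k ∈ Finset.Icc (g + 1) (g + (Q * M * n.factorial : ℕ)),
        Real.sin (f.eval (k : ℝ) * (2 * Real.pi * (C : ℝ) / ((M : ℝ) * (n.factorial : ℝ)))) =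
      0 :=
  stmt7_general f hodd Q hint M C n g
end

section
/- Let y > 0 be irrational and suppose there are infinitely many pairs of coprime positive integers (C_M, M) with |y − C_M/M| ≤ M^{(ε−1)/ε} for a fixed ε ∈ (0, 1/6). If M₁ < M₂ < ... enumerates the denominators M admitting such an approximation, then 2·M_{i+1} ≥ M_i^4 for every i ≥ 1. -/
theorem stmt8 (y ε : ℝ) (hy : 0 < y) (hirr : Irrational y)
    (hε : ε ∈ Set.Ioo (0 : ℝ) (1 / 6))
    (Mset : Set ℕ)
    (hMset : Mset = {M : ℕ | 0 < M ∧ ∃ C : ℕ, 0 < C ∧ Nat.Coprime C M ∧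
      |y - (C : ℝ) / (M : ℝ)| ≤ (M : ℝ) ^ ((ε - 1) / ε)})
    (hinf : Mset.Infinite)
    (M₁ M₂ : ℕ) (h1 : M₁ ∈ Mset) (h2 : M₂ ∈ Mset) (hlt : M₁ < M₂) :
    (M₁ : ℝ) ^ (4 : ℕ) ≤ 2 * (M₂ : ℝ) := by
  obtain ⟨hε0, hε6⟩ := hε
  subst hMset
  obtain ⟨hM1pos, C₁, hC₁pos, hcop1, happ1⟩ := h1
  obtain ⟨hM2pos, C₂, hC₂pos, hcop2, happ2⟩ := h2
  set e := (ε - 1) / ε with he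
  have hM1R : (0:ℝ) < M₁ := by exact_mod_cast hM1pos
  have hM2R : (0:ℝ) < M₂ := by exact_mod_cast hM2pos
  have hM12R : (M₁:ℝ) ≤ M₂ := by exact_mod_cast hlt.le
  have hM1one : (1:ℝ) ≤ M₁ := by exact_mod_cast hM1pos
  have hene : e ≤ 0 := div_nonpos_of_nonpos_of_nonneg (by linarith) hε0.le
  -- the two fractions are distinct
  have hne : C₁ * M₂ ≠ C₂ * M₁ := by
    intro h
    have hd1 : M₁ ∣ M₂ := (hcop1.symm).dvd_of_dvd_mul_left ⟨C₂, by linarith [h]⟩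
    have hd2 : M₂ ∣ M₁ := (hcop2.symm).dvd_of_dvd_mul_left ⟨C₁, by linarith [h]⟩
    exact absurd (Nat.dvd_antisymm hd1 hd2) hlt.ne
  have hnum : (1:ℝ) ≤ |(C₁:ℝ) * M₂ - (C₂:ℝ) * M₁| := by
    have hz : ((C₁:ℤ) * M₂ - (C₂:ℤ) * M₁) ≠ 0 := by
      intro h
      apply hne
      have : (C₁:ℤ) * M₂ = (C₂:ℤ) * M₁ := by linarith [sub_eq_zero.mp h]
      exact_mod_cast this
    have := Int.one_le_abs hz
    have : ((1:ℤ):ℝ) ≤ (|(C₁:ℤ) * M₂ - (C₂:ℤ) * M₁| : ℝ) := by exact_mod_cast this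
    push_cast at this
    exact this
  have key : (1:ℝ) / ((M₁:ℝ) * M₂) ≤ |(C₁:ℝ)/M₁ - (C₂:ℝ)/M₂| := by
    have heq : (C₁:ℝ)/M₁ - (C₂:ℝ)/M₂ = ((C₁:ℝ)*M₂ - (C₂:ℝ)*M₁) / ((M₁:ℝ)*M₂) := by
      field_simp
    rw [heq, abs_div, abs_of_pos (mul_pos hM1R hM2R)]
    gcongr
  have tri : |(C₁:ℝ)/M₁ - (C₂:ℝ)/M₂| ≤ (M₁:ℝ)^e + (M₂:ℝ)^e := by
    calc |(C₁:ℝ)/M₁ - (C₂:ℝ)/M₂| ≤ |(C₁:ℝ)/M₁ - y| + |y - (C₂:ℝ)/M₂| :=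
          abs_sub_le _ y _
      _ = |y - (C₁:ℝ)/M₁| + |y - (C₂:ℝ)/M₂| := by rw [abs_sub_comm]
      _ ≤ (M₁:ℝ)^e + (M₂:ℝ)^e := add_le_add happ1 happ2
  have hmono : (M₂:ℝ)^e ≤ (M₁:ℝ)^e := Real.rpow_le_rpow_of_nonpos hM1R hM12R hene
  have hpe : (0:ℝ) < (M₁:ℝ)^e := Real.rpow_pos_of_pos hM1R e
  have hchain : (1:ℝ) / ((M₁:ℝ) * M₂) ≤ 2 * (M₁:ℝ)^e := by linarith
  have h4 : (1:ℝ) ≤ 2 * (M₁:ℝ)^e * ((M₁:ℝ) * M₂) := by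
    rw [div_le_iff₀ (by positivity)] at hchain; linarith
  have h5 : (1:ℝ) / ((M₁:ℝ)^e) ≤ 2 * M₁ * M₂ := by
    rw [div_le_iff₀ hpe]; nlinarith
  have hexp : (4:ℝ) ≤ -e - 1 := by
    have hee : -e - 1 = (1 - 2*ε)/ε := by
      rw [he]; field_simp; ring
    rw [hee, le_div_iff₀ hε0]; linarith
  have hstep : ((M₁:ℝ) ^ (4:ℕ) : ℝ) ≤ (M₁:ℝ) ^ (-e - 1) := by
    rw [← Real.rpow_natCast (M₁:ℝ) 4]
    exact Real.rpow_le_rpow_of_exponent_le hM1one (by push_cast; linarith)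
  have hfin : (M₁:ℝ) ^ (-e - 1) ≤ 2 * M₂ := by
    have : (M₁:ℝ) ^ (-e - 1) = (1 / (M₁:ℝ)^e) / M₁ := by
      rw [Real.rpow_sub hM1R, Real.rpow_neg hM1R.le, Real.rpow_one, one_div]
    rw [this]
    rw [div_le_iff₀ hM1R]
    calc (1:ℝ) / ((M₁:ℝ)^e) ≤ 2 * M₁ * M₂ := h5
      _ = 2 * M₂ * M₁ := by ring
  linarith
end

section
/- For α ∈ (0,1), c > 0, and reals a ≥ b ≥ 2y̅ > 0, the function κ(y) = y(a−y)^{−c} + (b−y)(a−b+y)^{−c} is nonincreasing on (0, b/2]. Consequently, for integers t ≥ 2, s ≥ 1, and 1 ≤ i ≤ ⌊(t−1)/2⌋, one has (t−i)(s+2+i)^{α−2} + i(s+t+2−i)^{α−2} ≥ t(s+2+t/2)^{α−2}. -/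
open Real Set

lemma kappa_anti (c a b : ℝ) (hc : 0 < c) (hb : 0 < b) (hba : b ≤ a) :
    AntitoneOn (fun y => y * (a - y) ^ (-c) + (b - y) * (a - b + y) ^ (-c))
      (Set.Ioc 0 (b / 2)) := by
  have hsub : Set.Ioc 0 (b/2) ⊆ Set.Ioo 0 b := fun x hx => ⟨hx.1, lt_of_le_of_lt hx.2 (by linarith)⟩
  have hderiv : ∀ y ∈ Set.Ioo (0:ℝ) b, HasDerivAt
      (fun y => y * (a - y) ^ (-c) + (b - y) * (a - b + y) ^ (-c))
      ((1 * (a - y) ^ (-c) + y * (-1 * (-c) * (a - y) ^ (-c - 1))) +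
       ((-1) * (a - b + y) ^ (-c) + (b - y) * (1 * (-c) * (a - b + y) ^ (-c - 1)))) y := by
    intro y hy
    have hay : 0 < a - y := by linarith [hy.2]
    have haby : 0 < a - b + y := by linarith [hy.1]
    have h1 : HasDerivAt (fun y : ℝ => a - y) (-1) y := by
      simpa using (hasDerivAt_id y).const_sub a
    have h2 : HasDerivAt (fun y : ℝ => b - y) (-1) y := by
      simpa using (hasDerivAt_id y).const_sub b
    have h3 : HasDerivAt (fun y : ℝ => a - b + y) 1 y := by
      simpa using (hasDerivAt_id y).const_add (a - b)
    have h4 : HasDerivAt (fun y : ℝ => (a - y) ^ (-c)) (-1 * (-c) * (a - y) ^ (-c - 1)) y :=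
      h1.rpow_const (Or.inl hay.ne')
    have h5 : HasDerivAt (fun y : ℝ => (a - b + y) ^ (-c)) (1 * (-c) * (a - b + y) ^ (-c - 1)) y :=
      h3.rpow_const (Or.inl haby.ne')
    exact ((hasDerivAt_id y).mul h4).add (h2.mul h5)
  apply antitoneOn_of_deriv_nonpos (convex_Ioc 0 (b/2))
  · intro y hy
    exact ((hderiv y (hsub hy)).continuousAt.continuousWithinAt)
  · intro y hy
    rw [interior_Ioc] at hy
    exact (hderiv y (hsub (Ioo_subset_Ioc_self hy))).differentiableAt.differentiableWithinAt
  · intro y hy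
    rw [interior_Ioc] at hy
    have hy' : y ∈ Set.Ioo (0:ℝ) b := hsub (Ioo_subset_Ioc_self hy)
    rw [(hderiv y hy').deriv]
    have hay : 0 < a - y := by linarith [hy'.2]
    have haby : 0 < a - b + y := by linarith [hy'.1]
    have hle : a - b + y ≤ a - y := by linarith [hy.2]
    have e1 : (a - y) ^ (-c) ≤ (a - b + y) ^ (-c) :=
      Real.rpow_le_rpow_of_nonpos haby hle (by linarith)
    have e2 : (a - y) ^ (-c - 1) ≤ (a - b + y) ^ (-c - 1) :=
      Real.rpow_le_rpow_of_nonpos haby hle (by linarith)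
    have hyb : y ≤ b - y := by linarith [hy.2]
    have hp1 : (0:ℝ) ≤ (a - y) ^ (-c - 1) := Real.rpow_nonneg hay.le _
    have e3 : y * (a - y) ^ (-c - 1) ≤ (b - y) * (a - b + y) ^ (-c - 1) :=
      mul_le_mul hyb e2 hp1 (by linarith)
    nlinarith [hc.le]

theorem stmt13 (α : ℝ) (hα : α ∈ Set.Ioo (0 : ℝ) 1) :
    (∀ c a b ybar : ℝ, 0 < c → 0 < ybar → 2 * ybar ≤ b → b ≤ a →
      ∀ y₁ y₂ : ℝ, 0 < y₁ → y₁ ≤ y₂ → y₂ ≤ b / 2 →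
        y₂ * (a - y₂) ^ (-c) + (b - y₂) * (a - b + y₂) ^ (-c) ≤
          y₁ * (a - y₁) ^ (-c) + (b - y₁) * (a - b + y₁) ^ (-c)) ∧
      (∀ t s i : ℕ, 2 ≤ t → 1 ≤ s → 1 ≤ i → i ≤ (t - 1) / 2 →
        (t : ℝ) * ((s : ℝ) + 2 + (t : ℝ) / 2) ^ (α - 2) ≤
          ((t : ℝ) - (i : ℝ)) * ((s : ℝ) + 2 + (i : ℝ)) ^ (α - 2) +
            (i : ℝ) * ((s : ℝ) + (t : ℝ) + 2 - (i : ℝ)) ^ (α - 2)) := by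
  have main : ∀ c a b ybar : ℝ, 0 < c → 0 < ybar → 2 * ybar ≤ b → b ≤ a →
      ∀ y₁ y₂ : ℝ, 0 < y₁ → y₁ ≤ y₂ → y₂ ≤ b / 2 →
        y₂ * (a - y₂) ^ (-c) + (b - y₂) * (a - b + y₂) ^ (-c) ≤
          y₁ * (a - y₁) ^ (-c) + (b - y₁) * (a - b + y₁) ^ (-c) := by
    intro c a b ybar hc hybar h2y hba y₁ y₂ hy₁ h12 hy₂
    have hb : 0 < b := by linarith
    exact kappa_anti c a b hc hb hba ⟨hy₁, le_trans h12 hy₂⟩ ⟨lt_of_lt_of_le hy₁ h12, hy₂⟩ h12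
  refine ⟨main, ?_⟩
  intro t s i ht hs hi hi2
  have h2i : i * 2 ≤ t - 1 := (Nat.le_div_iff_mul_le (by norm_num)).mp hi2
  have h2i' : (i : ℝ) * 2 ≤ (t : ℝ) - 1 := by
    have : ((i * 2 : ℕ) : ℝ) ≤ ((t - 1 : ℕ) : ℝ) := Nat.cast_le.mpr h2i
    push_cast [Nat.cast_sub (by omega : 1 ≤ t)] at this
    linarith
  have hc : 0 < 2 - α := by linarith [hα.2]
  have h := main (2 - α) ((s : ℝ) + (t : ℝ) + 2) (t : ℝ) (i : ℝ) hc
    (by exact_mod_cast Nat.pos_of_ne_zero (by omega)) (by linarith) (by linarith)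
    (i : ℝ) ((t : ℝ) / 2)
    (by exact_mod_cast Nat.pos_of_ne_zero (by omega)) (by linarith) le_rfl
  have e1 : (s : ℝ) + (t : ℝ) + 2 - (t : ℝ) / 2 = (s : ℝ) + 2 + (t : ℝ) / 2 := by ring
  have e2 : (s : ℝ) + (t : ℝ) + 2 - (t : ℝ) + (t : ℝ) / 2 = (s : ℝ) + 2 + (t : ℝ) / 2 := by ring
  have e3 : (s : ℝ) + (t : ℝ) + 2 - (t : ℝ) + (i : ℝ) = (s : ℝ) + 2 + (i : ℝ) := by ring
  have e4 : -(2 - α) = α - 2 := by ring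
  rw [e1, e2, e3, e4] at h
  calc (t : ℝ) * ((s : ℝ) + 2 + (t : ℝ) / 2) ^ (α - 2)
      = (t : ℝ)/2 * ((s : ℝ) + 2 + (t : ℝ)/2) ^ (α - 2)
        + ((t : ℝ) - (t : ℝ)/2) * ((s : ℝ) + 2 + (t : ℝ)/2) ^ (α - 2) := by ring
    _ ≤ _ := by linarith [h]
end

section
/- Let (c_k) be a nonnegative RBVS sequence with constant V (so ∑_{k=l}^∞ |c_k − c_{k+1}| ≤ V c_l for all l) and let ξ > 0. Then there is a constant C(ξ) > 0 depending only on ξ such that for all integers 1 ≤ l ≤ L, ∑_{k=l}^{L} |c_k − c_{k+1}|·k^ξ ≤ V·c_l·l^ξ + V·C(ξ)·∑_{k=l}^{L} c_k·k^{ξ−1}. -/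
/-!
Abel summation rewrites `∑ |cₖ - cₖ₊₁| k^ξ` as `l^ξ ∑_{k=l}^L |cₖ - cₖ₊₁|` plus the increments
`(j+1)^ξ - j^ξ` weighted by the tails `∑_{k=j+1}^L |cₖ - cₖ₊₁|`. The RBVS condition bounds the first
sum by `V c_l` and each tail by `V c_j`, while `(j+1)^ξ - j^ξ ≤ (ξ + 2^ξ) j^(ξ-1)` for `j ≥ 1`.
-/

open Finset Real

theorem sum_Icc_mul_eq_mul_sum_add_sum_Ioc {R : Type*} [CommRing R] (a w : ℕ → R) {l L : ℕ}
    (hlL : l ≤ L) :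
    ∑ k ∈ Icc l L, a k * w k =
      w l * ∑ k ∈ Icc l L, a k + ∑ j ∈ Ico l L, (w (j + 1) - w j) * ∑ k ∈ Ioc j L, a k := by
  induction L, hlL using Nat.le_induction with
  | base => simp [mul_comm]
  | succ L hlL ih =>
    have tails : ∑ j ∈ Ico l L, (w (j + 1) - w j) * ∑ k ∈ Ioc j (L + 1), a k =
        ∑ j ∈ Ico l L, (w (j + 1) - w j) * ∑ k ∈ Ioc j L, a k + (w L - w l) * a (L + 1) := by
      rw [← sum_Ico_sub w hlL, sum_mul, ← sum_add_distrib]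
      refine sum_congr rfl fun j hj => ?_
      rw [sum_Ioc_succ_top (mem_Ico.mp hj).2.le, mul_add]
    rw [sum_Icc_succ_top (by omega), sum_Icc_succ_top (by omega), sum_Ico_succ_top hlL,
      tails, Nat.Ioc_succ_singleton, sum_singleton, ih]
    ring

theorem one_add_rpow_le {ξ t : ℝ} (hξ : 0 ≤ ξ) (ht₀ : 0 ≤ t) (ht₁ : t ≤ 1) :
    (1 + t) ^ ξ ≤ 1 + (ξ + 2 ^ ξ) * t := by
  have h2ξ : 0 ≤ 2 ^ ξ * t := by positivity
  rcases le_or_gt ξ 1 with hξ₁ | hξ₁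
  · nlinarith [rpow_one_add_le_one_add_mul_self (by linarith : (-1 : ℝ) ≤ t) hξ hξ₁]
  · -- convexity on the chord from `1` to `2`, since `1 + t = (1 - t) • 1 + t • 2`
    have chord := (convexOn_rpow hξ₁.le).2 (Set.mem_Ici.2 zero_le_one)
      (Set.mem_Ici.2 zero_le_two) (sub_nonneg.2 ht₁) ht₀ (by ring)
    simp only [smul_eq_mul, one_rpow] at chord
    rw [show (1 - t) * 1 + t * 2 = 1 + t by ring] at chord
    nlinarith

theorem add_one_rpow_sub_rpow_le {ξ x : ℝ} (hξ : 0 ≤ ξ) (hx : 1 ≤ x) :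
    (x + 1) ^ ξ - x ^ ξ ≤ (ξ + 2 ^ ξ) * x ^ (ξ - 1) := by
  have hx₀ : 0 < x := by linarith
  have hscale : (x + 1) ^ ξ = x ^ ξ * (1 + x⁻¹) ^ ξ := by
    rw [← mul_rpow hx₀.le (by positivity), mul_add, mul_inv_cancel₀ hx₀.ne', mul_one]
  have hbound := one_add_rpow_le hξ (inv_nonneg.2 hx₀.le) (inv_le_one_of_one_le₀ hx)
  calc (x + 1) ^ ξ - x ^ ξ ≤ x ^ ξ * (1 + (ξ + 2 ^ ξ) * x⁻¹) - x ^ ξ := by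
        rw [hscale]; gcongr
    _ = (ξ + 2 ^ ξ) * x ^ (ξ - 1) := by
        rw [rpow_sub hx₀, rpow_one]; ring

theorem rpow_incr_mul_tail_le_of_rbvs {ξ V : ℝ} (hξ : 0 ≤ ξ) {c : ℕ → ℝ}
    (hrbvs : ∀ l : ℕ, 1 ≤ l → ∀ L : ℕ, l ≤ L → ∑ k ∈ Icc l L, |c k - c (k + 1)| ≤ V * c l)
    {j L : ℕ} (hj : 1 ≤ j) (hjL : j ≤ L) :
    (((j + 1 : ℕ) : ℝ) ^ ξ - (j : ℝ) ^ ξ) * ∑ k ∈ Ioc j L, |c k - c (k + 1)| ≤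
      V * (ξ + 2 ^ ξ) * (c j * (j : ℝ) ^ (ξ - 1)) := by
  have hj' : (1 : ℝ) ≤ j := by exact_mod_cast hj
  have htail : ∑ k ∈ Ioc j L, |c k - c (k + 1)| ≤ V * c j :=
    (sum_le_sum_of_subset_of_nonneg Ioc_subset_Icc_self fun _ _ _ => abs_nonneg _).trans
      (hrbvs j hj L hjL)
  have hincr := add_one_rpow_sub_rpow_le hξ hj'
  push_cast
  calc ((j + 1 : ℝ) ^ ξ - (j : ℝ) ^ ξ) * ∑ k ∈ Ioc j L, |c k - c (k + 1)|
      ≤ (ξ + 2 ^ ξ) * (j : ℝ) ^ (ξ - 1) * (V * c j) :=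
        mul_le_mul hincr htail (sum_nonneg fun _ _ => abs_nonneg _) (by positivity)
    _ = V * (ξ + 2 ^ ξ) * (c j * (j : ℝ) ^ (ξ - 1)) := by ring

theorem stmt16 (ξ : ℝ) (hξ : 0 < ξ) :
    ∃ C : ℝ, 0 < C ∧ ∀ (c : ℕ → ℝ), (∀ k, 0 ≤ c k) → ∀ V : ℝ, 0 < V →
      (∀ l : ℕ, 1 ≤ l → ∀ L : ℕ, l ≤ L →
        ∑ k ∈ Finset.Icc l L, |c k - c (k + 1)| ≤ V * c l) →
      ∀ l L : ℕ, 1 ≤ l → l ≤ L →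
        ∑ k ∈ Finset.Icc l L, |c k - c (k + 1)| * (k : ℝ) ^ ξ ≤
          V * c l * (l : ℝ) ^ ξ + V * C * ∑ k ∈ Finset.Icc l L, c k * (k : ℝ) ^ (ξ - 1) := by
  refine ⟨ξ + 2 ^ ξ, by positivity, fun c hc V _ hrbvs l L hl hlL => ?_⟩
  have hhead : (∑ k ∈ Icc l L, |c k - c (k + 1)|) * (l : ℝ) ^ ξ ≤ V * c l * (l : ℝ) ^ ξ :=
    mul_le_mul_of_nonneg_right (hrbvs l hl L hlL) (by positivity)
  have htails : ∑ j ∈ Ico l L, (((j + 1 : ℕ) : ℝ) ^ ξ - (j : ℝ) ^ ξ) *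
        ∑ k ∈ Ioc j L, |c k - c (k + 1)| ≤
      V * (ξ + 2 ^ ξ) * ∑ k ∈ Icc l L, c k * (k : ℝ) ^ (ξ - 1) :=
    calc _ ≤ ∑ j ∈ Ico l L, V * (ξ + 2 ^ ξ) * (c j * (j : ℝ) ^ (ξ - 1)) :=
          sum_le_sum fun j hj => rpow_incr_mul_tail_le_of_rbvs hξ.le hrbvs
            (hl.trans (mem_Ico.mp hj).1) (mem_Ico.mp hj).2.le
      _ ≤ ∑ j ∈ Icc l L, V * (ξ + 2 ^ ξ) * (c j * (j : ℝ) ^ (ξ - 1)) :=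
          sum_le_sum_of_subset_of_nonneg Ico_subset_Icc_self fun j _ _ => by
            have := hc j; positivity
      _ = _ := (mul_sum ..).symm
  rw [sum_Icc_mul_eq_mul_sum_add_sum_Ioc _ (fun k : ℕ => (k : ℝ) ^ ξ) hlL]
  linarith
end

section
/- Let n ≥ 2 and let f be a monic real polynomial of degree n. For every positive integer m and real x, |∑_{k=1}^{m} e^{i f(k) x}|^{2^{n−1}} ≤ 2^{2^{n−1}}·m^{2^{n−1}−1}·(n−1) + 2^{2^{n−1}+1}·m^{2^{n−1}−n}·∑_{y_1,...,y_{n−1}=1}^{m} min{ m, 1/(2‖ n!·y_1⋯y_{n−1}·x/(2π) ‖) }, where ‖t‖ denotes the distance from t to the nearest integer (terms with ‖·‖ = 0 are interpreted as m). -/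
/-!
For `M ≤ m`, expanding `|S_M(g)|² = |∑_{k ≤ M} e^{i g(k)}|²` and grouping the pairs `(l + a, l)`
by their difference `a` gives van der Corput's inequality
`|S_M(g)|² ≤ 2 ∑_{a < m} |S_{M-a}(Δ_a g)|`. Iterating it `j` times, with the power-mean inequality
at each step, bounds `|S_M(g)|^{2^j}` by `2^{2^j-1} m^{2^j-j-1}` times the sum over `y ∈ [0, m)^j`
of the sums of the iterated differences `Δ_{y_1} ⋯ Δ_{y_j} g`.
For `g = x f` with `f` monic of degree `n` and `j = n - 1` that iterated difference is the linear
phase `n! y_1 ⋯ y_{n-1} x k + c`; its sum is a geometric series, bounded by `1 / (2‖α/2π‖)` because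
`|e^{iα} - 1| = 2|sin(α/2)| ≥ 4‖α/2π‖`. The at most `(n-1) m^{n-2}` tuples with some `y_i = 0`
contribute the trivial bound `m` each.
-/

/-- distance from `t` to the nearest integer -/
noncomputable def nearestDist (t : ℝ) : ℝ := min (Int.fract t) (1 - Int.fract t)

open Finset Polynomial Complex
open scoped fwdDiff ComplexConjugate

section MultiFwdDiff

variable {M G : Type*} [AddCommMonoid M] [AddCommGroup G]

def multiFwdDiff : {j : ℕ} → (Fin j → M) → (M → G) → M → G
  | 0, _, g => g
  | _ + 1, y, g => multiFwdDiff (Fin.tail y) (Δ_[y 0] g)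

lemma multiFwdDiff_cons {j : ℕ} (a : M) (y : Fin j → M) (g : M → G) :
    multiFwdDiff (Fin.cons a y) g = multiFwdDiff y (Δ_[a] g) :=
  rfl

end MultiFwdDiff

namespace Polynomial

variable {R : Type*} [CommRing R] {p : R[X]} {d : ℕ}

lemma coeff_taylor_of_natDegree_le_add_one (a : R) (hp : p.natDegree ≤ d + 1) :
    (taylor a p).coeff (d + 1) = p.coeff (d + 1) := by
  have h := natDegree_hasseDeriv_le p (d + 1)
  rw [taylor_coeff, eq_C_of_natDegree_le_zero (by omega : (hasseDeriv (d + 1) p).natDegree ≤ 0),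
    eval_C, hasseDeriv_coeff]
  simp

lemma natDegree_taylor_sub_le (a : R) (hp : p.natDegree ≤ d + 1) :
    (taylor a p - p).natDegree ≤ d := by
  rw [natDegree_le_iff_coeff_eq_zero]
  intro N hN
  obtain rfl | hN := eq_or_lt_of_le (Nat.succ_le_of_lt hN)
  · rw [coeff_sub, coeff_taylor_of_natDegree_le_add_one a hp, sub_self]
  · rw [coeff_sub, coeff_eq_zero_of_natDegree_lt (p := p) (by omega),
      coeff_eq_zero_of_natDegree_lt (by rw [natDegree_taylor]; omega), sub_zero]

lemma coeff_taylor_sub_self (a : R) (hp : p.natDegree ≤ d + 1) :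
    (taylor a p - p).coeff d = (d + 1) * a * p.coeff (d + 1) := by
  have h := natDegree_hasseDeriv_le p d
  rw [coeff_sub, taylor_coeff, eval_eq_sum_range' (n := 2) (by omega)]
  simp only [hasseDeriv_coeff, sum_range_succ, range_one, sum_singleton, zero_add,
    Nat.choose_self, Nat.cast_one, one_mul, pow_zero, mul_one, add_comm 1 d,
    Nat.choose_succ_self_right, Nat.cast_add, pow_one, add_sub_cancel_left]
  ring

lemma fwdDiff_eval_natCast (p : R[X]) (a : ℕ) :
    Δ_[a] (fun k : ℕ => p.eval (k : R)) = fun k : ℕ => (taylor (a : R) p - p).eval (k : R) := by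
  ext k
  simp [fwdDiff, taylor_eval]

theorem exists_multiFwdDiff_eval_eq {j : ℕ} (y : Fin j → ℕ) (hp : p.natDegree ≤ d + j) :
    ∃ q : R[X], q.natDegree ≤ d ∧
      q.coeff d = (d + j).descFactorial j * (∏ i, (y i : R)) * p.coeff (d + j) ∧
      multiFwdDiff y (fun k : ℕ => p.eval (k : R)) = fun k : ℕ => q.eval (k : R) := by
  induction j generalizing p with
  | zero => exact ⟨p, hp, by simp, rfl⟩
  | succ j ih =>
    rw [← add_assoc] at hp
    obtain ⟨q, hq, hqd, hqeval⟩ := ih (Fin.tail y) (natDegree_taylor_sub_le (y 0 : R) hp)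
    refine ⟨q, hq, ?_, ?_⟩
    · rw [hqd, coeff_taylor_sub_self _ hp, Fin.prod_univ_succ, ← add_assoc,
        Nat.succ_descFactorial_succ]
      push_cast
      simp only [Fin.tail]
      ring
    · rw [multiFwdDiff, fwdDiff_eval_natCast]
      exact hqeval

end Polynomial

lemma sum_Icc_sum_Icc_eq_sum_range_sum_Icc {β : Type*} [AddCommMonoid β] (F : ℕ → ℕ → β)
    (M : ℕ) :
    ∑ k ∈ Icc 1 M, ∑ l ∈ Icc 1 k, F k l = ∑ a ∈ range M, ∑ l ∈ Icc 1 (M - a), F (l + a) l := by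
  rw [sum_sigma', sum_sigma']
  refine sum_nbij' (fun p => ⟨p.1 - p.2, p.2⟩) (fun p => ⟨p.2 + p.1, p.2⟩) ?_ ?_ ?_ ?_ ?_ <;>
    rintro ⟨k, l⟩ h <;> simp only [mem_sigma, mem_Icc, mem_range] at h ⊢
  · omega
  · omega
  · simp only [Sigma.mk.injEq, heq_eq_eq, and_true]; omega
  · simp only [Sigma.mk.injEq, heq_eq_eq, and_true]; omega
  · congr; omega

lemma two_mul_re_sum_sum_mul_conj (u : ℕ → ℂ) (M : ℕ) :
    2 * (∑ k ∈ Icc 1 M, ∑ l ∈ Icc 1 k, u k * conj (u l)).re =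
      normSq (∑ k ∈ Icc 1 M, u k) + ∑ k ∈ Icc 1 M, normSq (u k) := by
  induction M with
  | zero => simp
  | succ M ih =>
    have hlast : ∑ l ∈ Icc 1 (M + 1), u (M + 1) * conj (u l) =
        u (M + 1) * conj (∑ l ∈ Icc 1 M, u l) + normSq (u (M + 1)) := by
      rw [sum_Icc_succ_top (by omega), mul_conj, map_sum, mul_sum]
    have hsymm : ((∑ k ∈ Icc 1 M, u k) * conj (u (M + 1))).re =
        (u (M + 1) * conj (∑ k ∈ Icc 1 M, u k)).re := by
      rw [← conj_re, map_mul, conj_conj, mul_comm]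
    rw [sum_Icc_succ_top (by omega), add_re, mul_add, ih, hlast, sum_Icc_succ_top (by omega),
      sum_Icc_succ_top (by omega), normSq_add, hsymm, add_re, ofReal_re]
    ring

theorem vanDerCorput_norm_sum_sq_le (u : ℕ → ℂ) (M : ℕ) :
    ‖∑ k ∈ Icc 1 M, u k‖ ^ 2 ≤
      2 * ∑ a ∈ range M, ‖∑ l ∈ Icc 1 (M - a), u (l + a) * conj (u l)‖ := by
  calc ‖∑ k ∈ Icc 1 M, u k‖ ^ 2
      ≤ 2 * (∑ k ∈ Icc 1 M, ∑ l ∈ Icc 1 k, u k * conj (u l)).re := by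
        rw [two_mul_re_sum_sum_mul_conj, ← normSq_eq_norm_sq, le_add_iff_nonneg_right]
        exact sum_nonneg fun k _ => normSq_nonneg _
    _ ≤ 2 * ‖∑ k ∈ Icc 1 M, ∑ l ∈ Icc 1 k, u k * conj (u l)‖ := by
        gcongr; exact re_le_norm _
    _ ≤ _ := by
        rw [sum_Icc_sum_Icc_eq_sum_range_sum_Icc (fun k l => u k * conj (u l))]
        gcongr
        exact norm_sum_le _ _

noncomputable def expSum (g : ℕ → ℝ) (M : ℕ) : ℂ := ∑ k ∈ Icc 1 M, exp (g k * I)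

lemma norm_expSum_le (g : ℕ → ℝ) (M : ℕ) : ‖expSum g M‖ ≤ M := by
  calc ‖expSum g M‖ ≤ ∑ k ∈ Icc 1 M, ‖exp (g k * I)‖ := norm_sum_le _ _
    _ = M := by simp [norm_exp_ofReal_mul_I]

lemma norm_expSum_sq_le (g : ℕ → ℝ) {m M : ℕ} (hM : M ≤ m) :
    ‖expSum g M‖ ^ 2 ≤ 2 * ∑ a ∈ range m, ‖expSum (Δ_[a] g) (M - a)‖ := by
  have hterm (a l : ℕ) : exp (g (l + a) * I) * conj (exp (g l * I)) = exp (Δ_[a] g l * I) := by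
    rw [← exp_conj, ← exp_add, fwdDiff]
    congr 1
    simp only [map_mul, conj_ofReal, conj_I, ofReal_sub]
    ring
  calc ‖expSum g M‖ ^ 2
      ≤ 2 * ∑ a ∈ range M, ‖∑ l ∈ Icc 1 (M - a), exp (g (l + a) * I) * conj (exp (g l * I))‖ :=
        vanDerCorput_norm_sum_sq_le _ M
    _ = 2 * ∑ a ∈ range M, ‖expSum (Δ_[a] g) (M - a)‖ := by simp only [hterm, expSum]
    _ ≤ 2 * ∑ a ∈ range m, ‖expSum (Δ_[a] g) (M - a)‖ := by gcongr

lemma sum_piFinset_const_succ {α β : Type*} [AddCommMonoid β] {j : ℕ} (s : Finset α)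
    (F : (Fin (j + 1) → α) → β) :
    ∑ y ∈ Fintype.piFinset (fun _ => s), F y =
      ∑ a ∈ s, ∑ z ∈ Fintype.piFinset (fun _ : Fin j => s), F (Fin.cons a z) := by
  have h := filter_piFinset_eq_map_consEquiv (fun _ : Fin (j + 1) => s) (fun _ => True)
  simp only [filter_true] at h
  rw [h, sum_map, sum_product]
  rfl

theorem norm_expSum_pow_two_pow_le (j : ℕ) (g : ℕ → ℝ) {m M : ℕ} (hM : M ≤ m) :
    ‖expSum g M‖ ^ 2 ^ j ≤ 2 ^ (2 ^ j - 1) * (m : ℝ) ^ (2 ^ j - j - 1) *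
      ∑ y ∈ Fintype.piFinset (fun _ : Fin j => range m),
        ‖expSum (multiFwdDiff y g) (M - ∑ i, y i)‖ := by
  induction j generalizing g M with
  | zero => simp [multiFwdDiff]
  | succ j ih =>
    set N := 2 ^ j
    have hN : j + 1 ≤ N := Nat.lt_two_pow_self
    calc ‖expSum g M‖ ^ 2 ^ (j + 1) = (‖expSum g M‖ ^ 2) ^ N := by rw [pow_succ', pow_mul]
      _ ≤ (2 * ∑ a ∈ range m, ‖expSum (Δ_[a] g) (M - a)‖) ^ N :=
        pow_le_pow_left₀ (by positivity) (norm_expSum_sq_le g hM) N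
      _ ≤ 2 ^ N * ((m : ℝ) ^ (N - 1) * ∑ a ∈ range m, ‖expSum (Δ_[a] g) (M - a)‖ ^ N) := by
        rw [mul_pow]
        gcongr
        have := pow_sum_le_card_mul_sum_pow (s := range m)
          (f := fun a => ‖expSum (Δ_[a] g) (M - a)‖) (fun _ _ => norm_nonneg _) (N - 1)
        rwa [Nat.sub_add_cancel Nat.one_le_two_pow, card_range] at this
      _ ≤ 2 ^ N * ((m : ℝ) ^ (N - 1) * ∑ a ∈ range m, 2 ^ (N - 1) * (m : ℝ) ^ (N - j - 1) *
            ∑ z ∈ Fintype.piFinset (fun _ : Fin j => range m),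
              ‖expSum (multiFwdDiff z (Δ_[a] g)) (M - a - ∑ i, z i)‖) := by
        gcongr with a
        exact ih _ (by omega)
      _ = _ := by
        rw [show 2 ^ (j + 1) - 1 = N + (N - 1) by rw [pow_succ]; omega,
          show 2 ^ (j + 1) - (j + 1) - 1 = (N - 1) + (N - j - 1) by rw [pow_succ]; omega,
          pow_add, pow_add, sum_piFinset_const_succ]
        simp only [multiFwdDiff_cons, Fin.sum_cons, ← Nat.sub_sub, mul_sum]
        refine sum_congr rfl fun a _ => sum_congr rfl fun z _ => ?_
        ring

open Real in
lemma two_mul_nearestDist_le_abs_sin (t : ℝ) : 2 * nearestDist t ≤ |Real.sin (π * t)| := by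
  have hsin : |Real.sin (π * t)| = |Real.sin (π * (t - round t))| := by
    rw [mul_sub, mul_comm π (round t : ℝ), sin_sub_int_mul_pi, abs_mul, abs_neg_one_zpow, one_mul]
  have hround := abs_sub_round t
  rw [nearestDist, ← abs_sub_round_eq_min, hsin]
  calc 2 * |t - round t| = 2 / π * |π * (t - round t)| := by
        rw [abs_mul, abs_of_pos pi_pos]; field_simp
    _ ≤ |Real.sin (π * (t - round t))| := mul_abs_le_abs_sin (by
        rw [abs_mul, abs_of_pos pi_pos]; nlinarith [pi_pos])

lemma nearestDist_nonneg (t : ℝ) : 0 ≤ nearestDist t :=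
  le_min (Int.fract_nonneg t) (by linarith [Int.fract_lt_one t])

open Real in
theorem norm_expSum_linear_le (α c : ℝ) (L : ℕ) (h : nearestDist (α / (2 * π)) ≠ 0) :
    ‖expSum (fun k => α * k + c) L‖ ≤ 1 / (2 * nearestDist (α / (2 * π))) := by
  set δ := nearestDist (α / (2 * π))
  have hδ : 0 < δ := (nearestDist_nonneg _).lt_of_ne' h
  set z := exp (α * I)
  have hz1 : 4 * δ ≤ ‖z - 1‖ := by
    have := two_mul_nearestDist_le_abs_sin (α / (2 * π))
    rw [show π * (α / (2 * π)) = α / 2 by field_simp] at this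
    rw [show z = exp (I * α) by rw [mul_comm], norm_exp_I_mul_ofReal_sub_one, norm_mul,
      Real.norm_eq_abs, Real.norm_eq_abs, abs_two]
    linarith
  have hterms : expSum (fun k => α * k + c) L = exp (c * I) * ∑ k ∈ Icc 1 L, z ^ k := by
    rw [expSum, mul_sum]
    refine sum_congr rfl fun k _ => ?_
    rw [← Complex.exp_nat_mul, ← Complex.exp_add]
    push_cast
    ring_nf
  have hgeom : expSum (fun k => α * k + c) L * (z - 1) = exp (c * I) * (z ^ (L + 1) - z ^ 1) := by
    rw [hterms, mul_assoc, ← Ico_add_one_right_eq_Icc, geom_sum_Ico_mul z (by omega)]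
  have hbound : ‖expSum (fun k => α * k + c) L‖ * ‖z - 1‖ ≤ 2 := by
    rw [← norm_mul, hgeom, norm_mul, norm_exp_ofReal_mul_I, one_mul]
    refine (norm_sub_le _ _).trans ?_
    simp only [norm_pow, norm_exp_ofReal_mul_I, one_pow, pow_one, z]
    norm_num
  rw [le_div_iff₀ (by positivity)]
  nlinarith [norm_nonneg (expSum (fun k => α * k + c) L)]

-- `Classical` is opened so that this unfolds to the summand of `stmt19` definitionally.
open Classical in
noncomputable def minInvNearestDist (m : ℕ) (t : ℝ) : ℝ :=
  if nearestDist t = 0 then (m : ℝ) else min (m : ℝ) (1 / (2 * nearestDist t))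

lemma minInvNearestDist_nonneg (m : ℕ) (t : ℝ) : 0 ≤ minInvNearestDist m t := by
  unfold minInvNearestDist
  split_ifs with h
  · positivity
  · have := (nearestDist_nonneg t).lt_of_ne' h
    positivity

lemma minInvNearestDist_le (m : ℕ) (t : ℝ) : minInvNearestDist m t ≤ m := by
  unfold minInvNearestDist
  split_ifs
  exacts [le_rfl, min_le_left _ _]

lemma norm_expSum_linear_le_minInvNearestDist (α c : ℝ) {L m : ℕ} (hL : L ≤ m) :
    ‖expSum (fun k => α * k + c) L‖ ≤ minInvNearestDist m (α / (2 * Real.pi)) := by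
  have htriv : ‖expSum (fun k => α * k + c) L‖ ≤ m :=
    (norm_expSum_le _ L).trans (Nat.cast_le.2 hL)
  unfold minInvNearestDist
  split_ifs with h
  exacts [htriv, le_min htriv (norm_expSum_linear_le α c L h)]

lemma sum_piFinset_range_le_sum_piFinset_Icc_add {K m : ℕ} (F : (Fin K → ℕ) → ℝ)
    (hF0 : ∀ y, 0 ≤ F y) (hFm : ∀ y, F y ≤ m) :
    ∑ y ∈ Fintype.piFinset (fun _ => range m), F y ≤
      ∑ y ∈ Fintype.piFinset (fun _ => Icc 1 m), F y + K * m ^ K := by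
  classical
  set R := Fintype.piFinset fun _ : Fin K => range m
  have hcard : #{y ∈ R | ¬ ∀ i, y i ≠ 0} ≤ K * m ^ (K - 1) := by
    calc #{y ∈ R | ¬ ∀ i, y i ≠ 0} ≤ #(univ.biUnion fun i => {y ∈ R | y i = 0}) := by
          refine card_le_card fun y hy => ?_
          simp only [mem_filter, not_forall, not_not] at hy
          obtain ⟨hy, i, hi⟩ := hy
          exact mem_biUnion.2 ⟨i, mem_univ _, mem_filter.2 ⟨hy, hi⟩⟩
      _ ≤ #(univ : Finset (Fin K)) * m ^ (K - 1) := by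
          refine card_biUnion_le_card_mul _ _ _ fun i _ => ?_
          rw [Fintype.card_filter_piFinset_const, card_range, Fintype.card_fin]
          split_ifs <;> simp
      _ = K * m ^ (K - 1) := by simp
  rw [← sum_filter_add_sum_filter_not R fun y => ∀ i, y i ≠ 0]
  refine add_le_add (sum_le_sum_of_subset_of_nonneg (fun y hy => ?_) fun y _ _ => hF0 y) ?_
  · simp only [R, mem_filter, Fintype.mem_piFinset, mem_range, mem_Icc] at hy ⊢
    exact fun i => ⟨Nat.one_le_iff_ne_zero.2 (hy.2 i), (hy.1 i).le⟩
  · calc ∑ y ∈ R with ¬ ∀ i, y i ≠ 0, F y ≤ #{y ∈ R | ¬ ∀ i, y i ≠ 0} • (m : ℝ) :=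
          sum_le_card_nsmul _ _ _ fun y _ => hFm y
      _ ≤ (K * m ^ (K - 1) : ℕ) • (m : ℝ) := by gcongr
      _ = K * m ^ K := by
          rw [nsmul_eq_mul]
          push_cast
          cases K <;> simp [pow_succ, mul_assoc]

theorem norm_expSum_pow_two_pow_le_sum_Icc (K : ℕ) (g : ℕ → ℝ) {m : ℕ}
    (B : (Fin K → ℕ) → ℝ) (hB0 : ∀ y, 0 ≤ B y) (hBm : ∀ y, B y ≤ m)
    (hB : ∀ y, ‖expSum (multiFwdDiff y g) (m - ∑ i, y i)‖ ≤ B y) :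
    ‖expSum g m‖ ^ 2 ^ K ≤ 2 ^ (2 ^ K - 1) * (m : ℝ) ^ (2 ^ K - 1) * K +
      2 ^ (2 ^ K - 1) * (m : ℝ) ^ (2 ^ K - K - 1) *
        ∑ y ∈ Fintype.piFinset (fun _ : Fin K => Icc 1 m), B y := by
  have hK : K + 1 ≤ 2 ^ K := Nat.lt_two_pow_self
  calc ‖expSum g m‖ ^ 2 ^ K
      ≤ 2 ^ (2 ^ K - 1) * (m : ℝ) ^ (2 ^ K - K - 1) *
          ∑ y ∈ Fintype.piFinset (fun _ : Fin K => range m),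
            ‖expSum (multiFwdDiff y g) (m - ∑ i, y i)‖ :=
        norm_expSum_pow_two_pow_le K g le_rfl
    _ ≤ 2 ^ (2 ^ K - 1) * (m : ℝ) ^ (2 ^ K - K - 1) *
          ∑ y ∈ Fintype.piFinset (fun _ : Fin K => range m), B y := by
        gcongr with y
        exact hB y
    _ ≤ 2 ^ (2 ^ K - 1) * (m : ℝ) ^ (2 ^ K - K - 1) *
          (∑ y ∈ Fintype.piFinset (fun _ : Fin K => Icc 1 m), B y + K * m ^ K) := by
        gcongr
        exact sum_piFinset_range_le_sum_piFinset_Icc_add B hB0 hBm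
    _ = _ := by
        rw [show 2 ^ K - 1 = (2 ^ K - K - 1) + K by omega, pow_add]
        ring

theorem exists_multiFwdDiff_eval_mul_eq_linear {K : ℕ} {f : ℝ[X]} (hmonic : f.Monic)
    (hdeg : f.natDegree = K + 1) (x : ℝ) (y : Fin K → ℕ) :
    ∃ c : ℝ, multiFwdDiff y (fun k : ℕ => f.eval (k : ℝ) * x) =
      fun k : ℕ => (K + 1).factorial * (∏ i, (y i : ℝ)) * x * k + c := by
  obtain ⟨q, hq, hq1, hqeval⟩ := exists_multiFwdDiff_eval_eq (d := 1) y
    (natDegree_mul_C_le f x |>.trans (by omega))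
  have hfac : (1 + K).descFactorial K = (K + 1).factorial := by
    simpa [add_comm] using Nat.factorial_mul_descFactorial (Nat.le_add_left K 1)
  rw [coeff_mul_C, add_comm 1 K, ← hdeg, hmonic.coeff_natDegree, hdeg, add_comm K 1, hfac] at hq1
  refine ⟨q.coeff 0, ?_⟩
  have hg : (fun k : ℕ => f.eval (k : ℝ) * x) = fun k : ℕ => (f * C x).eval (k : ℝ) := by simp
  rw [hg, hqeval]
  ext k
  conv_lhs => rw [eq_X_add_C_of_natDegree_le_one hq]
  simp only [eval_add, eval_mul, eval_C, eval_X, hq1]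
  ring

open Classical in
theorem stmt19_general (n : ℕ) (hn : 2 ≤ n) (f : Polynomial ℝ) (hmonic : f.Monic)
    (hdeg : f.natDegree = n) (m : ℕ) (x : ℝ) :
    ‖∑ k ∈ Finset.Icc 1 m, Complex.exp (Complex.I * ((f.eval ((k : ℕ) : ℝ) : ℝ) : ℂ) * (x : ℂ))‖
        ^ (2 ^ (n - 1)) ≤
      2 ^ (2 ^ (n - 1)) * (m : ℝ) ^ (2 ^ (n - 1) - 1) * ((n : ℝ) - 1) +
        2 ^ (2 ^ (n - 1) + 1) * (m : ℝ) ^ ((2 : ℤ) ^ (n - 1) - (n : ℤ)) *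
          ∑ y ∈ Fintype.piFinset fun _ : Fin (n - 1) => Finset.Icc 1 m,
            (if nearestDist ((n.factorial : ℝ) * (∏ i, ((y i : ℕ) : ℝ)) * x / (2 * Real.pi)) = 0
              then (m : ℝ)
              else min (m : ℝ)
                (1 / (2 * nearestDist
                  ((n.factorial : ℝ) * (∏ i, ((y i : ℕ) : ℝ)) * x / (2 * Real.pi))))) := by
  obtain ⟨K, rfl⟩ : ∃ K, n = K + 1 := ⟨n - 1, by omega⟩
  set g : ℕ → ℝ := fun k => f.eval (k : ℝ) * x
  set B : (Fin K → ℕ) → ℝ := fun y =>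
    minInvNearestDist m ((K + 1).factorial * (∏ i, (y i : ℝ)) * x / (2 * Real.pi))
  have hsum : ∑ k ∈ Icc 1 m, exp (I * ((f.eval (k : ℝ) : ℝ) : ℂ) * x) = expSum g m :=
    sum_congr rfl fun k _ => by simp only [g]; push_cast; ring_nf
  have hterm (y : Fin K → ℕ) : ‖expSum (multiFwdDiff y g) (m - ∑ i, y i)‖ ≤ B y := by
    obtain ⟨c, hc⟩ := exists_multiFwdDiff_eval_mul_eq_linear hmonic hdeg x y
    rw [hc]
    exact norm_expSum_linear_le_minInvNearestDist _ c (Nat.sub_le _ _)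
  have hK : K + 1 ≤ 2 ^ K := Nat.lt_two_pow_self
  have hexp : (m : ℝ) ^ ((2 : ℤ) ^ K - ((K : ℤ) + 1)) = (m : ℝ) ^ (2 ^ K - K - 1) := by
    rw [← zpow_natCast]
    congr 1
    push_cast [Nat.sub_sub, Nat.cast_sub hK]
    ring
  simp only [Nat.add_sub_cancel, Nat.cast_add, Nat.cast_one, add_sub_cancel_right, hsum, hexp]
  refine (norm_expSum_pow_two_pow_le_sum_Icc K g B (fun y => minInvNearestDist_nonneg _ _)
    (fun y => minInvNearestDist_le _ _) hterm).trans ?_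
  gcongr ?_ * _ * _ + ?_ * _ * _
  · exact pow_le_pow_right₀ one_le_two (Nat.sub_le _ _)
  · exact sum_nonneg fun y _ => minInvNearestDist_nonneg _ _
  · exact pow_le_pow_right₀ one_le_two (by omega)

open Classical in
theorem stmt19 (n : ℕ) (hn : 2 ≤ n) (f : Polynomial ℝ) (hmonic : f.Monic)
    (hdeg : f.natDegree = n) (m : ℕ) (hm : 0 < m) (x : ℝ) :
    ‖∑ k ∈ Finset.Icc 1 m, Complex.exp (Complex.I * ((f.eval ((k : ℕ) : ℝ) : ℝ) : ℂ) * (x : ℂ))‖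
        ^ (2 ^ (n - 1)) ≤
      2 ^ (2 ^ (n - 1)) * (m : ℝ) ^ (2 ^ (n - 1) - 1) * ((n : ℝ) - 1) +
        2 ^ (2 ^ (n - 1) + 1) * (m : ℝ) ^ ((2 : ℤ) ^ (n - 1) - (n : ℤ)) *
          ∑ y ∈ Fintype.piFinset fun _ : Fin (n - 1) => Finset.Icc 1 m,
            (if nearestDist ((n.factorial : ℝ) * (∏ i, ((y i : ℕ) : ℝ)) * x / (2 * Real.pi)) = 0
              then (m : ℝ)
              else min (m : ℝ)
                (1 / (2 * nearestDist
                  ((n.factorial : ℝ) * (∏ i, ((y i : ℕ) : ℝ)) * x / (2 * Real.pi))))) :=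
  stmt19_general n hn f hmonic hdeg m x
end
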